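/- arXiv:2204.03602 — 3 statements merged into one kernel-verified Lean document; each statement's English description precedes it below -/
import Mathlib

section
/- If the kernel density g is symmetric about zero, i.e. g(x) = g(−x) for all x ∈ ℝ, then the normalizing factor reduces to Z_θ = ρσ + 2δσ·E[G(−α√Y)], and the cumulative distribution function of X ~ TD(θ) satisfies F(μ; θ) = 1/2; in particular μ is a median of X. -/
/-! With `Y ~ Gamma(p, 1)` one has `T(w) = P(Y ≤ w²/α²)`, so exchanging the order of
integration gives `∫ T g = E[P(|W| ≥ α√Y)]` for `W ~ g`, and this is `2 E[G(-α√Y)]` when `g`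
is even. The unnormalized density `(ρ + δ T) g` is then even as well, so it puts half of its
mass on `(-∞, 0]`; after the substitution `w = (x - μ)/σ` this is `F(μ) = 1/2`. The mass is
nonzero because `T > 0` away from `0`. -/

open MeasureTheory Real Set Filter

noncomputable def lincGamma (p u : ℝ) : ℝ := ∫ w in (0:ℝ)..u, w ^ (p - 1) * Real.exp (-w)

noncomputable def Tfun (p α x : ℝ) : ℝ := lincGamma p (x ^ 2 / α ^ 2) / Real.Gamma p

noncomputable def gammaPDF (p y : ℝ) : ℝ := y ^ (p - 1) * Real.exp (-y) / Real.Gamma p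

noncomputable def Znorm (p σ α ρ δ : ℝ) (g : ℝ → ℝ) : ℝ :=
  σ * ∫ w : ℝ, (ρ + δ * Tfun p α w) * g w

noncomputable def tdPDF (p μ σ α ρ δ : ℝ) (g : ℝ → ℝ) (x : ℝ) : ℝ :=
  (1 / Znorm p σ α ρ δ g) * (ρ + δ * Tfun p α ((x - μ) / σ)) * g ((x - μ) / σ)

noncomputable def cdfOf (d : ℝ → ℝ) (x : ℝ) : ℝ := ∫ t in Iic x, d t

section EvenIntegrals

variable {E : Type*} [NormedAddCommGroup E] [NormedSpace ℝ E] {f : ℝ → E}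

theorem Function.Even.setIntegral_Ioi_eq (hf : f.Even) (a : ℝ) :
    ∫ x in Ioi a, f x = ∫ x in Iic (-a), f x := by
  rw [← integral_comp_neg_Ioi]
  congr with x
  exact (hf x).symm

theorem Function.Even.setIntegral_Iic_zero (hf : f.Even) (hfi : Integrable f) :
    ∫ x in Iic (0 : ℝ), f x = (1 / 2 : ℝ) • ∫ x, f x := by
  rw [← intervalIntegral.integral_Iic_add_Ioi hfi.integrableOn hfi.integrableOn,
    hf.setIntegral_Ioi_eq, neg_zero, ← two_smul ℝ, smul_smul]
  norm_num

theorem Function.Even.setIntegral_sq_le (hf : f.Even) (hfi : Integrable f) {c : ℝ} (hc : 0 < c) :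
    ∫ x in {x | c ^ 2 ≤ x ^ 2}, f x = (2 : ℝ) • ∫ x in Iic (-c), f x := by
  have hset : {x : ℝ | c ^ 2 ≤ x ^ 2} = Iic (-c) ∪ Ici c := by
    ext x
    simp only [mem_ofPred_eq, mem_union, mem_Iic, mem_Ici, sq_le_sq, abs_of_pos hc, le_abs']
  have hdisj : Disjoint (Iic (-c)) (Ici c) := Iic_disjoint_Ici.mpr (by linarith)
  rw [hset, setIntegral_union hdisj measurableSet_Ici hfi.integrableOn hfi.integrableOn,
    integral_Ici_eq_integral_Ioi, hf.setIntegral_Ioi_eq, two_smul]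

end EvenIntegrals

theorem setIntegral_Iic_comp_sub_div {E : Type*} [NormedAddCommGroup E] [NormedSpace ℝ E]
    (f : ℝ → E) (m : ℝ) {s : ℝ} (hs : 0 < s) :
    ∫ t in Iic m, f ((t - m) / s) = s • ∫ w in Iic (0 : ℝ), f w := by
  have hpre : (fun t => (t - m) / s) ⁻¹' Iic 0 = Iic m := by
    ext t
    simp [div_le_iff₀ hs]
  rw [← integral_indicator measurableSet_Iic, ← integral_indicator measurableSet_Iic, ← hpre]
  simp_rw [← Function.comp_def f, indicator_comp_right (fun t => (t - m) / s)]
  rw [integral_sub_right_eq_self (fun t => (Iic (0 : ℝ)).indicator f (t / s)) m,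
    Measure.integral_comp_div, abs_of_pos hs]

section SublevelFubini

variable {α : Type*} {g φ : α → ℝ} {k : ℝ → ℝ}

theorem setIntegral_Ioi_indicator_sublevel (w : α) :
    ∫ y in Ioi 0, {z : α × ℝ | z.2 ≤ φ z.1}.indicator (fun z => g z.1 * k z.2) (w, y)
      = (∫ y in Ioc 0 (φ w), k y) * g w := by
  change ∫ y in Ioi 0, (Iic (φ w)).indicator (fun y => g w * k y) y = _
  rw [setIntegral_indicator measurableSet_Iic, Ioi_inter_Iic, integral_const_mul, mul_comm]

variable [MeasurableSpace α] {μ : Measure α}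

theorem integrable_indicator_sublevel_prod (hg : Integrable g μ) (hk : IntegrableOn k (Ioi 0))
    (hφ : Measurable φ) :
    Integrable ({z : α × ℝ | z.2 ≤ φ z.1}.indicator fun z => g z.1 * k z.2)
      (μ.prod (volume.restrict (Ioi 0))) :=
  (hg.mul_prod hk).indicator (measurableSet_le measurable_snd (hφ.comp measurable_fst))

theorem integrable_setIntegral_Ioc_mul (hg : Integrable g μ) (hk : IntegrableOn k (Ioi 0))
    (hφ : Measurable φ) : Integrable (fun w => (∫ y in Ioc 0 (φ w), k y) * g w) μ := by
  simpa only [setIntegral_Ioi_indicator_sublevel] using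
    (integrable_indicator_sublevel_prod hg hk hφ).integral_prod_left

variable [SFinite μ]

theorem integral_setIntegral_Ioc_mul_eq (hg : Integrable g μ) (hk : IntegrableOn k (Ioi 0))
    (hφ : Measurable φ) :
    ∫ w, (∫ y in Ioc 0 (φ w), k y) * g w ∂μ
      = ∫ y in Ioi 0, (∫ w in {w | y ≤ φ w}, g w ∂μ) * k y := by
  have hy : ∀ y, ∫ w, {z : α × ℝ | z.2 ≤ φ z.1}.indicator (fun z => g z.1 * k z.2) (w, y) ∂μ
      = (∫ w in {w | y ≤ φ w}, g w ∂μ) * k y := fun y => by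
    change ∫ w, {w | y ≤ φ w}.indicator (fun w => g w * k y) w ∂μ = _
    rw [integral_indicator (measurableSet_le measurable_const hφ), integral_mul_const]
  have hF := integrable_indicator_sublevel_prod hg hk hφ
  simp_rw [← setIntegral_Ioi_indicator_sublevel, ← hy]
  rw [← integral_prod _ hF, integral_prod_symm _ hF]

end SublevelFubini

theorem integral_mul_pos_of_ae_pos {α : Type*} [MeasurableSpace α] {μ : Measure α}
    {f g : α → ℝ} (hf : ∀ᵐ x ∂μ, 0 < f x) (hg : 0 ≤ᵐ[μ] g) (hfg : Integrable (fun x => f x * g x) μ)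
    (hg_pos : 0 < ∫ x, g x ∂μ) : 0 < ∫ x, f x * g x ∂μ := by
  have hgi : Integrable g μ := Integrable.of_integral_ne_zero hg_pos.ne'
  have hfg0 : 0 ≤ᵐ[μ] fun x => f x * g x := by
    filter_upwards [hf, hg] with x hfx hgx using mul_nonneg hfx.le hgx
  rw [integral_pos_iff_support_of_nonneg_ae hg hgi] at hg_pos
  rw [integral_pos_iff_support_of_nonneg_ae hfg0 hfg]
  refine hg_pos.trans_le (measure_mono_ae ?_)
  filter_upwards [hf] with x hfx hgx using mul_ne_zero hfx.ne' hgx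

section TruncatedGamma

variable {p α : ℝ}

theorem gammaPDF_pos (hp : 0 < p) {y : ℝ} (hy : 0 < y) : 0 < gammaPDF p y := by
  unfold gammaPDF
  have := Real.Gamma_pos_of_pos hp
  positivity

theorem integrableOn_gammaPDF (hp : 0 < p) : IntegrableOn (gammaPDF p) (Ioi 0) := by
  refine IntegrableOn.congr_fun ((Real.GammaIntegral_convergent hp).div_const (Real.Gamma p))
    (fun y _ => ?_) measurableSet_Ioi
  simp only [gammaPDF, mul_comm]

theorem Tfun_eq_intervalIntegral (w : ℝ) :
    Tfun p α w = ∫ y in (0 : ℝ)..(w ^ 2 / α ^ 2), gammaPDF p y := by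
  simp only [Tfun, lincGamma, gammaPDF, intervalIntegral.integral_div]

theorem Tfun_eq_setIntegral (w : ℝ) :
    Tfun p α w = ∫ y in Ioc 0 (w ^ 2 / α ^ 2), gammaPDF p y := by
  rw [Tfun_eq_intervalIntegral, intervalIntegral.integral_of_le (by positivity)]

theorem Tfun_neg (w : ℝ) : Tfun p α (-w) = Tfun p α w := by
  simp only [Tfun, neg_sq]

theorem Tfun_pos (hp : 0 < p) (hα : 0 < α) {w : ℝ} (hw : w ≠ 0) : 0 < Tfun p α w := by
  have hu : 0 < w ^ 2 / α ^ 2 := by positivity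
  rw [Tfun_eq_intervalIntegral]
  exact intervalIntegral.intervalIntegral_pos_of_pos_on
    ((intervalIntegrable_iff_integrableOn_Ioc_of_le hu.le).mpr
      ((integrableOn_gammaPDF hp).mono_set Ioc_subset_Ioi_self))
    (fun y hy => gammaPDF_pos hp hy.1) hu

end TruncatedGamma

section TrimodalDensity

variable {p α ρ δ : ℝ} {g : ℝ → ℝ}

theorem integrable_Tfun_mul (hp : 0 < p) (hg : Integrable g) :
    Integrable (fun w => Tfun p α w * g w) := by
  simp_rw [Tfun_eq_setIntegral]
  exact integrable_setIntegral_Ioc_mul hg (integrableOn_gammaPDF hp) (by fun_prop)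

theorem integrable_add_mul_Tfun_mul (hp : 0 < p) (hg : Integrable g) :
    Integrable (fun w => (ρ + δ * Tfun p α w) * g w) := by
  simpa only [add_mul, mul_assoc, Pi.add_def] using
    (hg.const_mul ρ).add ((integrable_Tfun_mul hp hg).const_mul δ)

theorem integral_add_mul_Tfun_mul (hp : 0 < p) (hg : Integrable g) :
    ∫ w, (ρ + δ * Tfun p α w) * g w = ρ * (∫ w, g w) + δ * ∫ w, Tfun p α w * g w := by
  simp only [add_mul, mul_assoc]
  rw [integral_add (hg.const_mul ρ) ((integrable_Tfun_mul hp hg).const_mul δ),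
    integral_const_mul, integral_const_mul]

theorem integral_Tfun_mul_of_even (hp : 0 < p) (hα : 0 < α) (hg : Integrable g) (hge : g.Even) :
    ∫ w, Tfun p α w * g w = 2 * ∫ y in Ioi 0, cdfOf g (-α * √y) * gammaPDF p y := by
  simp_rw [Tfun_eq_setIntegral]
  rw [integral_setIntegral_Ioc_mul_eq hg (integrableOn_gammaPDF hp) (by fun_prop),
    ← integral_const_mul]
  refine setIntegral_congr_fun measurableSet_Ioi fun y hy => ?_
  have hset : {w : ℝ | y ≤ w ^ 2 / α ^ 2} = {w | (α * √y) ^ 2 ≤ w ^ 2} := by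
    ext w
    rw [mem_ofPred_eq, mem_ofPred_eq, le_div_iff₀ (by positivity), mul_pow, sq_sqrt hy.le,
      mul_comm]
  rw [hset, hge.setIntegral_sq_le hg (by positivity [hy.out]), smul_eq_mul, cdfOf, neg_mul]
  ring

variable {μ σ : ℝ}

theorem cdfOf_tdPDF_self (hσ : 0 < σ) :
    cdfOf (tdPDF p μ σ α ρ δ g) μ
      = (∫ w in Iic 0, (ρ + δ * Tfun p α w) * g w) / ∫ w, (ρ + δ * Tfun p α w) * g w := by
  simp only [cdfOf, tdPDF, Znorm, mul_assoc]
  rw [integral_const_mul, setIntegral_Iic_comp_sub_div (fun w => (ρ + δ * Tfun p α w) * g w) μ hσ,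
    smul_eq_mul]
  field_simp

end TrimodalDensity

theorem stmt2_general (p μ σ α ρ δ : ℝ) (hp : 0 < p) (hσ : 0 < σ) (hα : 0 < α)
    (hρ : 0 ≤ ρ) (hδ : 0 ≤ δ) (hρδ : 0 < ρ + δ)
    (g : ℝ → ℝ) (hg0 : ∀ x, 0 ≤ g x)
    (hgi : Integrable g) (hg1 : (∫ x : ℝ, g x) = 1)
    (hsym : ∀ x : ℝ, g x = g (-x)) :
    Znorm p σ α ρ δ g
        = ρ * σ + 2 * δ * σ * (∫ y in Ioi (0:ℝ), cdfOf g (-α * Real.sqrt y) * gammaPDF p y)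
    ∧ cdfOf (tdPDF p μ σ α ρ δ g) μ = 1 / 2 := by
  have hge : g.Even := fun x => (hsym x).symm
  have hmass : ∫ w, (ρ + δ * Tfun p α w) * g w = ρ + δ * ∫ w, Tfun p α w * g w := by
    rw [integral_add_mul_Tfun_mul hp hgi, hg1, mul_one]
  constructor
  · rw [Znorm, hmass, integral_Tfun_mul_of_even hp hα hgi hge]
    ring
  have hT : 0 < ∫ w, Tfun p α w * g w :=
    integral_mul_pos_of_ae_pos ((volume.ae_ne 0).mono fun _ => Tfun_pos hp hα)
      (ae_of_all _ hg0) (integrable_Tfun_mul hp hgi) (hg1 ▸ one_pos)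
  have hmass_pos : 0 < ρ + δ * ∫ w, Tfun p α w * g w := by
    rcases hδ.eq_or_lt with rfl | hδ
    · simpa using hρδ
    · positivity
  have hkernel : (fun w => (ρ + δ * Tfun p α w) * g w).Even := fun w => by
    simp only [Tfun_neg, hge w]
  rw [cdfOf_tdPDF_self hσ, hkernel.setIntegral_Iic_zero (integrable_add_mul_Tfun_mul hp hgi),
    hmass, smul_eq_mul]
  field_simp

/-- symmetric kernel: simplified normalizing factor and `F(μ) = 1/2`,
so `μ` is a median. -/
theorem stmt2 (p μ σ α ρ δ : ℝ) (hp : 0 < p) (hσ : 0 < σ) (hα : 0 < α)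
    (hρ : 0 ≤ ρ) (hδ : 0 ≤ δ) (hρδ : 0 < ρ + δ)
    (g : ℝ → ℝ) (hg0 : ∀ x, 0 ≤ g x) (hgm : Measurable g)
    (hgi : Integrable g) (hg1 : (∫ x : ℝ, g x) = 1)
    (hsym : ∀ x : ℝ, g x = g (-x)) :
    Znorm p σ α ρ δ g
        = ρ * σ + 2 * δ * σ * (∫ y in Ioi (0:ℝ), cdfOf g (-α * Real.sqrt y) * gammaPDF p y)
    ∧ cdfOf (tdPDF p μ σ α ρ δ g) μ = 1 / 2 :=
  stmt2_general p μ σ α ρ δ hp hσ hα hρ hδ hρδ g hg0 hgi hg1 hsym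
end

section
/- For q ∈ ℝ such that all the integrals below exist, the Tsallis-type moment of X ~ TD(θ) satisfies E[f^{q−1}(X; θ)] = ((ρ+δ)σ/Z_θ)·E[f^{q−1}(σW+μ; θ)] + (δσ/Z_θ)·{ E[𝟙{W ≤ −α√Y}·f^{q−1}(σW+μ; θ)] − E[𝟙{W ≤ α√Y}·f^{q−1}(σW+μ; θ)] }, where E[f^{q−1}(X; θ)] = ∫_ℝ f^q(x; θ) dx and the right-hand side expectations are the corresponding integrals against g(w) and the Gamma(p,1) density. -/
/-! Substituting `x = σ w + μ` and writing `f ^ q = f ^ (q - 1) · f` turns `∫ f ^ q` into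
`(σ / Z) ∫ (ρ + δ T(w)) h(w) dw` with `h(w) = f ^ (q - 1) (σ w + μ) g(w)`; then split
`ρ + δ T = (ρ + δ) - δ (1 - T)`. Since `1 - T(w) = P(Y > w² / α²)` for `Y ~ Gamma(p, 1)`, Fubini for
the kernel `h(w) 𝟙{w² / α² < y} gammaPDF p y` gives `∫ h (1 - T) = E_Y [∫_{|w| < α √Y} h]`, and the
inner integral is the difference of the two integrals over half-lines. -/

open MeasureTheory Real Set Filter

lemma integrableOn_rpow_mul_exp_neg_Ioi {p : ℝ} (hp : 0 < p) :
    IntegrableOn (fun w : ℝ => w ^ (p - 1) * exp (-w)) (Ioi 0) := by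
  simpa only [mul_comm] using Real.GammaIntegral_convergent hp

lemma integrableOn_gammaPDF_Ioi {p : ℝ} (hp : 0 < p) : IntegrableOn (gammaPDF p) (Ioi 0) :=
  (integrableOn_rpow_mul_exp_neg_Ioi hp).div_const _

lemma lincGamma_add_integral_Ioi {p u : ℝ} (hp : 0 < p) (hu : 0 ≤ u) :
    lincGamma p u + ∫ w in Ioi u, w ^ (p - 1) * exp (-w) = Gamma p := by
  have hΓ := integrableOn_rpow_mul_exp_neg_Ioi hp
  rw [lincGamma, intervalIntegral.integral_interval_add_Ioi hΓ (hΓ.mono_set (Ioi_subset_Ioi hu)),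
    Gamma_eq_integral hp]
  simp only [mul_comm]

lemma setIntegral_Ioi_gammaPDF {p u : ℝ} (hp : 0 < p) (hu : 0 ≤ u) :
    ∫ y in Ioi u, gammaPDF p y = 1 - lincGamma p u / Gamma p := by
  simp only [gammaPDF, integral_div]
  rw [eq_sub_iff_add_eq, ← add_div, add_comm, lincGamma_add_integral_Ioi hp hu,
    div_self (Gamma_pos_of_pos hp).ne']

lemma one_sub_Tfun {p : ℝ} (hp : 0 < p) (α w : ℝ) :
    1 - Tfun p α w = ∫ y in Ioi (w ^ 2 / α ^ 2), gammaPDF p y :=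
  (setIntegral_Ioi_gammaPDF hp (by positivity)).symm

lemma sq_div_sq_lt_iff {α y w : ℝ} (hα : 0 < α) (hy : 0 ≤ y) :
    w ^ 2 / α ^ 2 < y ↔ w ∈ Ioo (-(α * √y)) (α * √y) := by
  rw [div_lt_iff₀ (by positivity), mem_Ioo, ← abs_lt, ← sq_lt_sq₀ (abs_nonneg w) (by positivity),
    sq_abs, mul_pow, sq_sqrt hy, mul_comm]

noncomputable def gammaTailKernel (p α : ℝ) (h : ℝ → ℝ) (z : ℝ × ℝ) : ℝ :=
  {z : ℝ × ℝ | z.1 ^ 2 / α ^ 2 < z.2}.indicator (fun z => h z.1 * gammaPDF p z.2) z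

section gammaTailKernel

variable {p α : ℝ} {h : ℝ → ℝ}

lemma integrable_gammaTailKernel (hp : 0 < p) (hh : Integrable h) :
    Integrable (gammaTailKernel p α h) (volume.prod (volume.restrict (Ioi 0))) :=
  (hh.mul_prod (integrableOn_gammaPDF_Ioi hp)).indicator
    (measurableSet_lt (by fun_prop) measurable_snd)

lemma setIntegral_gammaTailKernel_snd (hp : 0 < p) (w : ℝ) :
    ∫ y in Ioi 0, gammaTailKernel p α h (w, y) = h w * (1 - Tfun p α w) := by
  have hK : ∀ y,
      gammaTailKernel p α h (w, y) = h w * (Ioi (w ^ 2 / α ^ 2)).indicator (gammaPDF p) y := by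
    intro y
    by_cases hy : w ^ 2 / α ^ 2 < y <;> simp [gammaTailKernel, indicator, hy]
  simp_rw [hK, integral_const_mul, setIntegral_indicator measurableSet_Ioi, Ioi_inter_Ioi,
    max_eq_right (by positivity : (0 : ℝ) ≤ w ^ 2 / α ^ 2), one_sub_Tfun hp]

lemma integral_gammaTailKernel_fst (hα : 0 < α) {y : ℝ} (hy : 0 ≤ y) :
    ∫ w, gammaTailKernel p α h (w, y) = (∫ w in Ioo (-(α * √y)) (α * √y), h w) * gammaPDF p y := by
  have hK : ∀ w, gammaTailKernel p α h (w, y) =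
      (Ioo (-(α * √y)) (α * √y)).indicator (fun w => h w * gammaPDF p y) w := by
    intro w
    by_cases hw : w ^ 2 / α ^ 2 < y <;>
      simp [gammaTailKernel, indicator, hw, ← sq_div_sq_lt_iff hα hy]
  simp_rw [hK, integral_indicator measurableSet_Ioo, integral_mul_const]

lemma integrable_mul_one_sub_Tfun (hp : 0 < p) (hh : Integrable h) :
    Integrable fun w => h w * (1 - Tfun p α w) :=
  (integrable_gammaTailKernel hp hh).integral_prod_left.congr
    (.of_forall (setIntegral_gammaTailKernel_snd hp))

lemma integral_mul_one_sub_Tfun (hp : 0 < p) (hα : 0 < α) (hh : Integrable h) :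
    ∫ w, h w * (1 - Tfun p α w) =
      ∫ y in Ioi 0, (∫ w in Ioo (-(α * √y)) (α * √y), h w) * gammaPDF p y :=
  calc ∫ w, h w * (1 - Tfun p α w) = ∫ w, ∫ y in Ioi 0, gammaTailKernel p α h (w, y) := by
        simp_rw [setIntegral_gammaTailKernel_snd hp]
    _ = ∫ y in Ioi 0, ∫ w, gammaTailKernel p α h (w, y) :=
        integral_integral_swap (integrable_gammaTailKernel hp hh)
    _ = _ := setIntegral_congr_fun measurableSet_Ioi fun y hy =>
        integral_gammaTailKernel_fst hα (le_of_lt hy)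

end gammaTailKernel

lemma integral_eq_mul_integral_comp_mul_add (f : ℝ → ℝ) {σ : ℝ} (hσ : 0 < σ) (μ : ℝ) :
    ∫ x, f x = σ * ∫ w, f (σ * w + μ) := by
  rw [Measure.integral_comp_mul_left (fun x => f (x + μ)), integral_add_right_eq_self,
    smul_eq_mul, abs_of_pos (inv_pos.mpr hσ), mul_inv_cancel_left₀ hσ.ne']

lemma ne_zero_of_integrable_rpow {f : ℝ → ℝ} {q : ℝ} (hf : Integrable fun x => f x ^ q) :
    q ≠ 0 := by
  rintro rfl
  simp only [rpow_zero, integrable_const_iff, one_ne_zero, false_or] at hf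
  exact measure_ne_top volume univ Real.volume_univ

lemma rpow_eq_rpow_sub_one_mul {q : ℝ} (hq : q ≠ 0) (x : ℝ) : x ^ q = x ^ (q - 1) * x := by
  rcases eq_or_ne x 0 with rfl | hx
  · rw [zero_rpow hq, mul_zero]
  · rw [← rpow_add_one hx, sub_add_cancel]

lemma tdPDF_comp_mul_add {p μ σ α ρ δ : ℝ} (hσ : σ ≠ 0) (g : ℝ → ℝ) (w : ℝ) :
    tdPDF p μ σ α ρ δ g (σ * w + μ) = (ρ + δ * Tfun p α w) * g w / Znorm p σ α ρ δ g := by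
  rw [tdPDF, add_sub_cancel_right, mul_div_cancel_left₀ w hσ]
  ring

theorem stmt9_general (p μ σ α ρ δ : ℝ) (hp : 0 < p) (hσ : 0 < σ) (hα : 0 < α)
    (g : ℝ → ℝ)
    (q : ℝ)
    (hint1 : Integrable (fun x : ℝ => tdPDF p μ σ α ρ δ g x ^ q))
    (hint2 : Integrable (fun w : ℝ => tdPDF p μ σ α ρ δ g (σ * w + μ) ^ (q - 1) * g w)) :
    (∫ x : ℝ, tdPDF p μ σ α ρ δ g x ^ q)
      = ((ρ + δ) * σ / Znorm p σ α ρ δ g)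
          * (∫ w : ℝ, tdPDF p μ σ α ρ δ g (σ * w + μ) ^ (q - 1) * g w)
        + (δ * σ / Znorm p σ α ρ δ g) *
            (∫ y in Ioi (0:ℝ),
              ((∫ w in Iic (-α * Real.sqrt y),
                  tdPDF p μ σ α ρ δ g (σ * w + μ) ^ (q - 1) * g w)
                - (∫ w in Iic (α * Real.sqrt y),
                    tdPDF p μ σ α ρ δ g (σ * w + μ) ^ (q - 1) * g w)) * gammaPDF p y) := by
  set Z := Znorm p σ α ρ δ g
  set h := fun w => tdPDF p μ σ α ρ δ g (σ * w + μ) ^ (q - 1) * g w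
  have hmoment : ∫ x, tdPDF p μ σ α ρ δ g x ^ q = σ / Z * ∫ w, (ρ + δ * Tfun p α w) * h w := by
    have hpoint : ∀ w, tdPDF p μ σ α ρ δ g (σ * w + μ) ^ q = (ρ + δ * Tfun p α w) * h w / Z := by
      intro w
      rw [rpow_eq_rpow_sub_one_mul (ne_zero_of_integrable_rpow hint1)]
      nth_rw 2 [tdPDF_comp_mul_add hσ.ne']
      ring
    rw [integral_eq_mul_integral_comp_mul_add _ hσ μ]
    simp_rw [hpoint, integral_div]
    ring
  have hsplit : ∫ w, (ρ + δ * Tfun p α w) * h w =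
      (ρ + δ) * (∫ w, h w) - δ * ∫ w, h w * (1 - Tfun p α w) := by
    rw [← integral_const_mul, ← integral_const_mul, ← integral_sub (hint2.const_mul _)
      ((integrable_mul_one_sub_Tfun hp hint2).const_mul _)]
    congr 1 with w
    ring
  have hinner : ∀ y, ((∫ w in Iic (-α * √y), h w) - ∫ w in Iic (α * √y), h w) =
      -∫ w in Ioo (-(α * √y)) (α * √y), h w := by
    intro y
    rw [neg_mul, ← neg_sub, intervalIntegral.integral_Iic_sub_Iic hint2.integrableOn
      hint2.integrableOn, intervalIntegral.integral_of_le (neg_le_self (by positivity)),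
      integral_Ioc_eq_integral_Ioo]
  simp_rw [hmoment, hsplit, integral_mul_one_sub_Tfun hp hα hint2, hinner, neg_mul, integral_neg]
  ring

/-- representation of the Tsallis-type moment `E[f^{q−1}(X;θ)] = ∫ f^q`. -/
theorem stmt9 (p μ σ α ρ δ : ℝ) (hp : 0 < p) (hσ : 0 < σ) (hα : 0 < α)
    (hρ : 0 ≤ ρ) (hδ : 0 ≤ δ) (hρδ : 0 < ρ + δ)
    (g : ℝ → ℝ) (hg0 : ∀ x, 0 ≤ g x) (hgm : Measurable g)
    (hgi : Integrable g) (hg1 : (∫ x : ℝ, g x) = 1)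
    (q : ℝ)
    (hint1 : Integrable (fun x : ℝ => tdPDF p μ σ α ρ δ g x ^ q))
    (hint2 : Integrable (fun w : ℝ => tdPDF p μ σ α ρ δ g (σ * w + μ) ^ (q - 1) * g w))
    (hint3 : IntegrableOn (fun y : ℝ =>
        ((∫ w in Iic (-α * Real.sqrt y), tdPDF p μ σ α ρ δ g (σ * w + μ) ^ (q - 1) * g w)
          - (∫ w in Iic (α * Real.sqrt y),
              tdPDF p μ σ α ρ δ g (σ * w + μ) ^ (q - 1) * g w)) * gammaPDF p y)
        (Ioi 0)) :
    (∫ x : ℝ, tdPDF p μ σ α ρ δ g x ^ q)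
      = ((ρ + δ) * σ / Znorm p σ α ρ δ g)
          * (∫ w : ℝ, tdPDF p μ σ α ρ δ g (σ * w + μ) ^ (q - 1) * g w)
        + (δ * σ / Znorm p σ α ρ δ g) *
            (∫ y in Ioi (0:ℝ),
              ((∫ w in Iic (-α * Real.sqrt y),
                  tdPDF p μ σ α ρ δ g (σ * w + μ) ^ (q - 1) * g w)
                - (∫ w in Iic (α * Real.sqrt y),
                    tdPDF p μ σ α ρ δ g (σ * w + μ) ^ (q - 1) * g w)) * gammaPDF p y) :=
  stmt9_general p μ σ α ρ δ hp hσ hα g q hint1 hint2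
end

section
/- Existence of the Tsallis entropy: let q > 0 with q ≠ 1. If ∫_ℝ g^q(w) dw < ∞ (i.e. the Tsallis entropy S_q(W) of the kernel exists), then ∫_ℝ f^q(x; θ) dx ≤ ((ρ+δ)/Z_θ)^q · σ · ∫_ℝ g^q(w) dw < ∞; hence the Tsallis entropy S_q(X) = (1/(q−1))·[1 − ∫_ℝ f^q(x; θ) dx] of X ~ TD(θ) exists. -/
open MeasureTheory Real Set Filter

/-! Since `0 ≤ T ≤ 1`, the density satisfies `0 ≤ f(x) ≤ ((ρ + δ) / Z) · g((x - μ) / σ)`, and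
`t ↦ t ^ q` is monotone on `[0, ∞)`; the claim then follows from the affine change of variables
`∫ g((x - μ) / σ) ^ q dx = σ ∫ g ^ q`. The bound also holds when `Z = 0`, where `1 / 0 = 0` makes
both sides vanish. -/

section AffineChange

variable {E : Type*} [NormedAddCommGroup E]

theorem MeasureTheory.Integrable.comp_sub_div {F : ℝ → E} (hF : Integrable F) (μ : ℝ) {σ : ℝ}
    (hσ : σ ≠ 0) :
    Integrable fun x => F ((x - μ) / σ) :=
  (hF.comp_div hσ).comp_sub_right μ

theorem integral_comp_sub_div [NormedSpace ℝ E] (F : ℝ → E) (μ σ : ℝ) :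
    ∫ x, F ((x - μ) / σ) = |σ| • ∫ w, F w :=
  (integral_sub_right_eq_self (fun y => F (y / σ)) μ).trans (Measure.integral_comp_div F σ)

end AffineChange

theorem intervalIntegrable_rpow_mul_exp_neg {p : ℝ} (hp : 0 < p) (a b : ℝ) :
    IntervalIntegrable (fun w => w ^ (p - 1) * Real.exp (-w)) volume a b :=
  (intervalIntegral.intervalIntegrable_rpow' (by linarith)).mul_continuousOn
    (by fun_prop)

theorem continuous_lincGamma {p : ℝ} (hp : 0 < p) : Continuous (lincGamma p) :=
  intervalIntegral.continuous_primitive (intervalIntegrable_rpow_mul_exp_neg hp) 0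

theorem lincGamma_nonneg (p : ℝ) {u : ℝ} (hu : 0 ≤ u) : 0 ≤ lincGamma p u :=
  intervalIntegral.integral_nonneg hu fun _ hw =>
    mul_nonneg (Real.rpow_nonneg hw.1 _) (Real.exp_pos _).le

theorem lincGamma_le_Gamma {p : ℝ} (hp : 0 < p) {u : ℝ} (hu : 0 ≤ u) :
    lincGamma p u ≤ Real.Gamma p := by
  have hcomm : EqOn (fun w => Real.exp (-w) * w ^ (p - 1))
      (fun w => w ^ (p - 1) * Real.exp (-w)) (Ioi 0) := fun _ _ => mul_comm _ _
  rw [lincGamma, intervalIntegral.integral_of_le hu, Real.Gamma_eq_integral hp,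
    setIntegral_congr_fun measurableSet_Ioi hcomm]
  refine setIntegral_mono_set
    ((Real.GammaIntegral_convergent hp).congr_fun hcomm measurableSet_Ioi) ?_
    (ae_of_all _ Ioc_subset_Ioi_self)
  filter_upwards [ae_restrict_mem measurableSet_Ioi] with w hw
  exact mul_nonneg (Real.rpow_nonneg hw.le _) (Real.exp_pos _).le

theorem Tfun_nonneg {p : ℝ} (hp : 0 < p) (α x : ℝ) : 0 ≤ Tfun p α x :=
  div_nonneg (lincGamma_nonneg p (by positivity)) (Real.Gamma_pos_of_pos hp).le

theorem Tfun_le_one {p : ℝ} (hp : 0 < p) (α x : ℝ) : Tfun p α x ≤ 1 :=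
  div_le_one_of_le₀ (lincGamma_le_Gamma hp (by positivity)) (Real.Gamma_pos_of_pos hp).le

theorem continuous_Tfun {p : ℝ} (hp : 0 < p) (α : ℝ) : Continuous (Tfun p α) :=
  ((continuous_lincGamma hp).comp (by fun_prop)).div_const _

section TrimodalDensity

variable {p σ ρ δ : ℝ} (μ α : ℝ) {g : ℝ → ℝ}

theorem add_mul_Tfun_nonneg (hp : 0 < p) (hρ : 0 ≤ ρ) (hδ : 0 ≤ δ) (w : ℝ) :
    0 ≤ ρ + δ * Tfun p α w := by
  have := Tfun_nonneg hp α w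
  positivity

theorem add_mul_Tfun_le (hp : 0 < p) (hδ : 0 ≤ δ) (w : ℝ) : ρ + δ * Tfun p α w ≤ ρ + δ := by
  have := mul_le_of_le_one_right hδ (Tfun_le_one hp α w)
  linarith

theorem Znorm_nonneg (hp : 0 < p) (hσ : 0 ≤ σ) (hρ : 0 ≤ ρ) (hδ : 0 ≤ δ)
    (hg0 : ∀ x, 0 ≤ g x) : 0 ≤ Znorm p σ α ρ δ g :=
  mul_nonneg hσ (integral_nonneg fun w => mul_nonneg (add_mul_Tfun_nonneg α hp hρ hδ w) (hg0 w))

theorem tdPDF_nonneg (hp : 0 < p) (hσ : 0 ≤ σ) (hρ : 0 ≤ ρ) (hδ : 0 ≤ δ)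
    (hg0 : ∀ x, 0 ≤ g x) (x : ℝ) : 0 ≤ tdPDF p μ σ α ρ δ g x := by
  have := Znorm_nonneg α hp hσ hρ hδ hg0
  have := add_mul_Tfun_nonneg α hp hρ hδ ((x - μ) / σ)
  have := hg0 ((x - μ) / σ)
  unfold tdPDF
  positivity

theorem tdPDF_le (hp : 0 < p) (hσ : 0 ≤ σ) (hρ : 0 ≤ ρ) (hδ : 0 ≤ δ)
    (hg0 : ∀ x, 0 ≤ g x) (x : ℝ) :
    tdPDF p μ σ α ρ δ g x ≤ (ρ + δ) / Znorm p σ α ρ δ g * g ((x - μ) / σ) := by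
  have := Znorm_nonneg α hp hσ hρ hδ hg0
  rw [tdPDF, one_div_mul_eq_div]
  exact mul_le_mul_of_nonneg_right (div_le_div_of_nonneg_right (add_mul_Tfun_le α hp hδ _) this)
    (hg0 _)

theorem tdPDF_rpow_le (hp : 0 < p) (hσ : 0 ≤ σ) (hρ : 0 ≤ ρ) (hδ : 0 ≤ δ)
    (hg0 : ∀ x, 0 ≤ g x) {q : ℝ} (hq : 0 ≤ q) (x : ℝ) :
    tdPDF p μ σ α ρ δ g x ^ q
      ≤ ((ρ + δ) / Znorm p σ α ρ δ g) ^ q * g ((x - μ) / σ) ^ q := by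
  have := Znorm_nonneg α hp hσ hρ hδ hg0
  rw [← Real.mul_rpow (by positivity) (hg0 _)]
  exact Real.rpow_le_rpow (tdPDF_nonneg μ α hp hσ hρ hδ hg0 x)
    (tdPDF_le μ α hp hσ hρ hδ hg0 x) hq

theorem measurable_tdPDF (hp : 0 < p) (hgm : Measurable g) :
    Measurable (tdPDF p μ σ α ρ δ g) := by
  have := (continuous_Tfun hp α).measurable
  unfold tdPDF
  fun_prop

end TrimodalDensity

theorem stmt10_general (p μ σ α ρ δ : ℝ) (hp : 0 < p) (hσ : 0 < σ)
    (hρ : 0 ≤ ρ) (hδ : 0 ≤ δ)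
    (g : ℝ → ℝ) (hg0 : ∀ x, 0 ≤ g x) (hgm : Measurable g)
    (q : ℝ) (hq : 0 < q)
    (hgq : Integrable (fun w : ℝ => g w ^ q)) :
    Integrable (fun x : ℝ => tdPDF p μ σ α ρ δ g x ^ q)
    ∧ (∫ x : ℝ, tdPDF p μ σ α ρ δ g x ^ q)
        ≤ ((ρ + δ) / Znorm p σ α ρ δ g) ^ q * σ * (∫ w : ℝ, g w ^ q) := by
  set C := ((ρ + δ) / Znorm p σ α ρ δ g) ^ q
  have hbound := tdPDF_rpow_le μ α hp hσ.le hρ hδ hg0 hq.le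
  have hmajorant : Integrable fun x => C * g ((x - μ) / σ) ^ q :=
    (hgq.comp_sub_div μ hσ.ne').const_mul C
  have hint : Integrable fun x => tdPDF p μ σ α ρ δ g x ^ q := by
    refine hmajorant.mono' ((measurable_tdPDF μ α hp hgm).pow_const q).aestronglyMeasurable
      (ae_of_all _ fun x => ?_)
    rw [Real.norm_of_nonneg (Real.rpow_nonneg (tdPDF_nonneg μ α hp hσ.le hρ hδ hg0 x) q)]
    exact hbound x
  refine ⟨hint, ?_⟩
  calc ∫ x, tdPDF p μ σ α ρ δ g x ^ q
      ≤ ∫ x, C * g ((x - μ) / σ) ^ q := integral_mono hint hmajorant hbound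
    _ = C * σ * ∫ w, g w ^ q := by
      rw [integral_const_mul, integral_comp_sub_div (fun w => g w ^ q), abs_of_pos hσ,
        smul_eq_mul, mul_assoc]

/-- existence of the Tsallis entropy of the trimodal distribution. -/
theorem stmt10 (p μ σ α ρ δ : ℝ) (hp : 0 < p) (hσ : 0 < σ) (hα : 0 < α)
    (hρ : 0 ≤ ρ) (hδ : 0 ≤ δ) (hρδ : 0 < ρ + δ)
    (g : ℝ → ℝ) (hg0 : ∀ x, 0 ≤ g x) (hgm : Measurable g)
    (hgi : Integrable g) (hg1 : (∫ x : ℝ, g x) = 1)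
    (q : ℝ) (hq : 0 < q) (hq1 : q ≠ 1)
    (hgq : Integrable (fun w : ℝ => g w ^ q)) :
    Integrable (fun x : ℝ => tdPDF p μ σ α ρ δ g x ^ q)
    ∧ (∫ x : ℝ, tdPDF p μ σ α ρ δ g x ^ q)
        ≤ ((ρ + δ) / Znorm p σ α ρ δ g) ^ q * σ * (∫ w : ℝ, g w ^ q) :=
  stmt10_general p μ σ α ρ δ hp hσ hρ hδ g hg0 hgm q hq hgq
end
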